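/- Logarithmic optimization lemma (Step 3 of the proof of Proposition 2.1): For every β ∈ (0,1), γ ∈ (0,1) and C ≥ 1 there exists C' > 0 such that for all k ≥ 1 and all t ≥ 1, setting ε := t^{-β} + C k t^{-1}, one has ε^γ + e^{Ck} e^{-εt} ≤ C' ( k^γ t^{-βγ} + t^{-(1-β)} ). -/
import Mathlib

open Real

lemma real_rpow_add_le_add_rpow {a b : ℝ} (p : ℝ) (ha : 0 ≤ a) (hb : 0 ≤ b)
    (hp : 0 ≤ p) (hp1 : p ≤ 1) : (a + b) ^ p ≤ a ^ p + b ^ p := by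
  lift a to NNReal using ha
  lift b to NNReal using hb
  exact_mod_cast NNReal.rpow_add_le_add_rpow a b hp hp1

/-- Logarithmic optimization lemma (Step 3 of the proof of Proposition 2.1). -/
theorem log_optimization (β γ C : ℝ) (hβ : β ∈ Set.Ioo (0 : ℝ) 1)
    (hγ : γ ∈ Set.Ioo (0 : ℝ) 1) (hC : 1 ≤ C) :
    ∃ C' > (0 : ℝ), ∀ k : ℝ, 1 ≤ k → ∀ t : ℝ, 1 ≤ t →
      (t ^ (-β) + C * k * t⁻¹) ^ γ
          + Real.exp (C * k) * Real.exp (-(t ^ (-β) + C * k * t⁻¹) * t)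
        ≤ C' * (k ^ γ * t ^ (-(β * γ)) + t ^ (-(1 - β))) := by
  obtain ⟨hβ0, hβ1⟩ := hβ
  obtain ⟨hγ0, hγ1⟩ := hγ
  refine ⟨1 + C, by linarith, ?_⟩
  intro k hk t ht
  have ht0 : (0:ℝ) < t := by linarith
  have hk0 : (0:ℝ) < k := by linarith
  have hC0 : (0:ℝ) < C := by linarith
  -- εt = t^{1-β} + Ck
  have hmul : (t ^ (-β) + C * k * t⁻¹) * t = t ^ (1 - β) + C * k := by
    have h1 : t ^ (-β) * t = t ^ (1 - β) := by
      nth_rewrite 2 [← Real.rpow_one t]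
      rw [← Real.rpow_add ht0]
      ring_nf
    have h2 : C * k * t⁻¹ * t = C * k := by field_simp
    calc (t ^ (-β) + C * k * t⁻¹) * t = t ^ (-β) * t + C * k * t⁻¹ * t := by ring
      _ = t ^ (1 - β) + C * k := by rw [h1, h2]
  -- exp term equals exp(-t^{1-β})
  have hexp : Real.exp (C * k) * Real.exp (-(t ^ (-β) + C * k * t⁻¹) * t)
      = Real.exp (-(t ^ (1 - β))) := by
    rw [show -(t ^ (-β) + C * k * t⁻¹) * t = -((t ^ (-β) + C * k * t⁻¹) * t) by ring,
      hmul, ← Real.exp_add]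
    ring_nf
  have htpow : (0:ℝ) < t ^ (1 - β) := Real.rpow_pos_of_pos ht0 _
  have hexp_le : Real.exp (-(t ^ (1 - β))) ≤ t ^ (-(1 - β)) := by
    rw [Real.rpow_neg ht0.le, Real.exp_neg]
    have h := Real.add_one_le_exp (t ^ (1 - β))
    exact inv_anti₀ htpow (by linarith)
  -- ε^γ bound
  have hεγ : (t ^ (-β) + C * k * t⁻¹) ^ γ ≤ (1 + C) * (k ^ γ * t ^ (-(β * γ))) := by
    have hsub := real_rpow_add_le_add_rpow γ (Real.rpow_nonneg ht0.le (-β))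
      (by positivity : (0:ℝ) ≤ C * k * t⁻¹) hγ0.le hγ1.le
    have h1 : (t ^ (-β)) ^ γ = t ^ (-(β * γ)) := by
      rw [← Real.rpow_mul ht0.le]; ring_nf
    have h2 : (C * k * t⁻¹) ^ γ ≤ C * (k ^ γ * t ^ (-(β * γ))) := by
      have e1 : (C * k * t⁻¹) ^ γ = C ^ γ * k ^ γ * (t ^ (-(1:ℝ))) ^ γ := by
        rw [Real.mul_rpow (by positivity) (by positivity),
          Real.mul_rpow hC0.le hk0.le, Real.rpow_neg_one]
      rw [e1, ← Real.rpow_mul ht0.le]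
      have hCγ : C ^ γ ≤ C := by
        nth_rewrite 2 [← Real.rpow_one C]
        exact Real.rpow_le_rpow_of_exponent_le hC hγ1.le
      have htγ : t ^ (-1 * γ) ≤ t ^ (-(β * γ)) := by
        apply Real.rpow_le_rpow_of_exponent_le ht
        nlinarith
      have hkγ : (0:ℝ) < k ^ γ := Real.rpow_pos_of_pos hk0 _
      have hCγ0 : (0:ℝ) < C ^ γ := Real.rpow_pos_of_pos hC0 _
      have ht1 : (0:ℝ) < t ^ (-1 * γ) := Real.rpow_pos_of_pos ht0 _
      calc C ^ γ * k ^ γ * t ^ (-1 * γ) ≤ C * k ^ γ * t ^ (-1 * γ) := by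
            exact mul_le_mul_of_nonneg_right (mul_le_mul_of_nonneg_right hCγ hkγ.le) ht1.le
        _ ≤ C * k ^ γ * t ^ (-(β * γ)) := by
            exact mul_le_mul_of_nonneg_left htγ (by positivity)
        _ = C * (k ^ γ * t ^ (-(β * γ))) := by ring
    have h3 : t ^ (-(β * γ)) ≤ k ^ γ * t ^ (-(β * γ)) := by
      have hkγ : (1:ℝ) ≤ k ^ γ := Real.one_le_rpow hk hγ0.le
      nlinarith [Real.rpow_pos_of_pos ht0 (-(β * γ))]
    calc (t ^ (-β) + C * k * t⁻¹) ^ γ ≤ (t ^ (-β)) ^ γ + (C * k * t⁻¹) ^ γ := hsub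
      _ ≤ k ^ γ * t ^ (-(β * γ)) + C * (k ^ γ * t ^ (-(β * γ))) := by
          rw [h1] at *; exact add_le_add h3 h2
      _ = (1 + C) * (k ^ γ * t ^ (-(β * γ))) := by ring
  rw [hexp]
  have hpos1 : (0:ℝ) ≤ k ^ γ * t ^ (-(β * γ)) := by positivity
  have hpos2 : (0:ℝ) ≤ t ^ (-(1 - β)) := by positivity
  nlinarith [hexp_le, hεγ]
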